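/- Let W ⊆ V be a nice space, let w ∈ W∖{0}, enumerate R(w) = {α₁,…,α_s}, let U be the s×s Gram matrix U_{pq} = ⟨α_p, α_q⟩, and suppose 0 does not belong to the convex hull of R(w). If there exist x₁,…,x_s with every x_i > 0 such that U x = (1,…,1)ᵀ, then mcc(R(w)) lies in the intrinsic interior of the convex hull of R(w), and consequently there exists X ∈ 𝔞 such that w̃ = exp(π(X))w satisfies π(m_𝔤(w̃))w̃ = ‖m_𝔤(w̃)‖² w̃ (i.e., the orbit of w is distinguished). -/

import Mathlib

open scoped InnerProductSpace
open Finset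
open scoped Classical

/-- The (restricted) moment map of a linear family of operators `π` on an inner
product space `V`: `momentMap π v` is the unique element of `E` with
`⟪momentMap π v, Y⟫ = ⟪π Y v, v⟫ / ‖v‖²` for all `Y`. -/
noncomputable def momentMap {E V : Type*} [NormedAddCommGroup E] [InnerProductSpace ℝ E]
    [FiniteDimensional ℝ E] [NormedAddCommGroup V] [InnerProductSpace ℝ V]
    (π : E →ₗ[ℝ] V →L[ℝ] V) (v : V) : E :=
  (InnerProductSpace.toDual ℝ E).symm <| LinearMap.toContinuousLinearMap
    { toFun := fun X => ⟪(π X) v, v⟫_ℝ / ‖v‖ ^ 2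
      map_add' := fun X Y => by
        simp [map_add, ContinuousLinearMap.add_apply, inner_add_left, add_div]
      map_smul' := fun c X => by
        simp [map_smul, ContinuousLinearMap.smul_apply, inner_smul_left, mul_div_assoc] }

/-- The weight space `V_α = {v : ∀ X ∈ 𝔞, π(X)v = ⟪α,X⟫v}`. -/
def wtSpace {E V : Type*} [NormedAddCommGroup E] [InnerProductSpace ℝ E]
    [NormedAddCommGroup V] [InnerProductSpace ℝ V]
    (π : E →ₗ[ℝ] V →L[ℝ] V) (𝔞 : Submodule ℝ E) (α : E) : Submodule ℝ V where
  carrier := {v | ∀ X ∈ 𝔞, (π X) v = ⟪α, X⟫_ℝ • v}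
  add_mem' := fun {a b} ha hb X hX => by rw [map_add, ha X hX, hb X hX, smul_add]
  zero_mem' := fun X hX => by simp
  smul_mem' := fun t a ha X hX => by rw [map_smul, ha X hX, smul_comm]

/-- The (restricted) root space `𝔤_γ = {Y : ∀ X ∈ 𝔞, [X,Y] = ⟪γ,X⟫Y}`. -/
def rootSpace {E : Type*} [NormedAddCommGroup E] [InnerProductSpace ℝ E]
    (bk : E →ₗ[ℝ] E →ₗ[ℝ] E) (𝔞 : Submodule ℝ E) (γ : E) : Submodule ℝ E where
  carrier := {Y | ∀ X ∈ 𝔞, bk X Y = ⟪γ, X⟫_ℝ • Y}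
  add_mem' := fun {a b} ha hb X hX => by rw [map_add, ha X hX, hb X hX, smul_add]
  zero_mem' := fun X hX => by simp
  smul_mem' := fun t a ha X hX => by rw [map_smul, ha X hX, smul_comm]

/-- A subspace `W ⊆ V` is `A`-invariant if `π(X)W ⊆ W` for all `X ∈ 𝔞`. -/
def AInvariant {E V : Type*} [NormedAddCommGroup E] [InnerProductSpace ℝ E]
    [NormedAddCommGroup V] [InnerProductSpace ℝ V]
    (π : E →ₗ[ℝ] V →L[ℝ] V) (𝔞 : Submodule ℝ E) (W : Submodule ℝ V) : Prop :=
  ∀ X ∈ 𝔞, ∀ w ∈ W, (π X) w ∈ W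

/-- An `A`-invariant subspace `W ⊆ V` is a nice space if `momentMap π w ∈ 𝔞` for
every nonzero `w ∈ W`. -/
def IsNiceSpace {E V : Type*} [NormedAddCommGroup E] [InnerProductSpace ℝ E]
    [FiniteDimensional ℝ E] [NormedAddCommGroup V] [InnerProductSpace ℝ V]
    (π : E →ₗ[ℝ] V →L[ℝ] V) (𝔞 : Submodule ℝ E) (W : Submodule ℝ V) : Prop :=
  AInvariant π 𝔞 W ∧ ∀ w ∈ W, w ≠ 0 → momentMap π w ∈ 𝔞

/-!
The Gram system says that the centre of mass `p` of `R(w)` with weights `x` satisfies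
`⟪α, p⟫ = (∑ x)⁻¹` for every `α ∈ R(w)`. So the whole hull lies in the hyperplane
`⟪·, p⟫ = ‖p‖²`, which makes `p` its point of minimal norm, and `p` lies in the intrinsic interior
because all its weights are positive.

For the orbit, minimise the coercive function `Z ↦ ∑ ‖w_α‖² exp ⟪α - p, Z⟫` on the span of the
`α - p`: at the minimum, reweighting `R(w)` by `‖w_α‖² exp ⟪α, Z⟫` keeps its centre of mass at `p`.
For `X = Z / 2` the components of `exp (π X) w` are `exp ⟪α, X⟫ • w_α`, so its moment map, which
lies in `𝔞` by niceness, is exactly this reweighted centre of mass `p`; and `π p` acts on every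
component by `⟪α, p⟫ = ‖p‖²`.
-/

open Filter Topology Submodule Finset

section Exponential

variable {V : Type*} [NormedAddCommGroup V] [NormedSpace ℝ V] [CompleteSpace V]

theorem hasSum_exp_apply (A : V →L[ℝ] V) (v : V) :
    HasSum (fun n => ((n.factorial : ℝ)⁻¹) • (A ^ n) v) (NormedSpace.exp A v) :=
  (NormedSpace.exp_series_hasSum_exp' (𝕂 := ℝ) A).mapL (ContinuousLinearMap.apply ℝ V v)

theorem exp_apply_of_apply_eq_smul {A : V →L[ℝ] V} {v : V} {r : ℝ} (h : A v = r • v) :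
    NormedSpace.exp A v = Real.exp r • v := by
  have hpow : ∀ n : ℕ, (A ^ n) v = r ^ n • v := by
    intro n
    induction n with
    | zero => simp
    | succ n ih =>
      change (A ^ n) (A v) = _
      rw [h, map_smul, ih, smul_smul, pow_succ']
  refine (hasSum_exp_apply A v).unique ?_
  rw [Real.exp_eq_exp_ℝ]
  simpa only [hpow, smul_smul, smul_eq_mul] using
    (NormedSpace.exp_series_hasSum_exp' (𝕂 := ℝ) r).smul_const v

theorem exp_apply_mem {A : V →L[ℝ] V} {W : Submodule ℝ V} (hWc : IsClosed (W : Set V))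
    (hA : ∀ v ∈ W, A v ∈ W) {v : V} (hv : v ∈ W) : NormedSpace.exp A v ∈ W := by
  have hpow : ∀ n : ℕ, (A ^ n) v ∈ W := by
    intro n
    induction n with
    | zero => simpa using hv
    | succ n ih => rw [pow_succ']; exact hA _ ih
  rw [← (hasSum_exp_apply A v).tsum_eq]
  exact tsum_mem hWc fun n => W.smul_mem _ (hpow n)

end Exponential

section CenterMass

variable {R E ι : Type*} [Field R] [AddCommGroup E] [Module R E]

theorem Finset.centerMass_eq_iff_sum_smul_sub_eq_zero {t : Finset ι} {w : ι → R} {z : ι → E}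
    {p : E} (hw : ∑ i ∈ t, w i ≠ 0) :
    t.centerMass w z = p ↔ ∑ i ∈ t, w i • (z i - p) = 0 := by
  simp only [Finset.centerMass, smul_sub, Finset.sum_sub_distrib, ← Finset.sum_smul]
  rw [inv_smul_eq_iff₀ hw, sub_eq_zero]

theorem Submodule.centerMass_id_mem (S : Submodule R E) {t : Finset E} (ht : ∀ a ∈ t, a ∈ S)
    (w : E → R) : t.centerMass w id ∈ S :=
  S.smul_mem _ (S.sum_mem fun a ha => S.smul_mem _ (ht a ha))

end CenterMass

section MinimalNorm

variable {E : Type*} [NormedAddCommGroup E] [InnerProductSpace ℝ E]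

theorem inner_eq_of_mem_convexHull {s : Set E} {p : E} {t : ℝ} (hs : ∀ a ∈ s, ⟪a, p⟫_ℝ = t)
    {q : E} (hq : q ∈ convexHull ℝ s) : ⟪q, p⟫_ℝ = t :=
  convexHull_min (t := {z | ⟪z, p⟫_ℝ = t}) hs
    (by simpa only [real_inner_comm p, innerₛₗ_apply_apply] using
      convex_hyperplane (innerₛₗ ℝ p).isLinear t) hq

theorem eq_of_mem_convexHull_of_norm_le {s : Set E} {p q : E} {t : ℝ}
    (hs : ∀ a ∈ s, ⟪a, p⟫_ℝ = t) (hp : p ∈ convexHull ℝ s) (hq : q ∈ convexHull ℝ s)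
    (hle : ‖q‖ ≤ ‖p‖) : q = p := by
  have hpp : ‖p‖ ^ 2 = t := by
    rw [← real_inner_self_eq_norm_sq]
    exact inner_eq_of_mem_convexHull hs hp
  have hqp := inner_eq_of_mem_convexHull hs hq
  have : ‖q - p‖ ^ 2 ≤ 0 := by
    rw [norm_sub_sq_real, hqp]
    nlinarith [norm_nonneg q, norm_nonneg p]
  exact sub_eq_zero.1 (norm_eq_zero.1 (by nlinarith [norm_nonneg (q - p)]))

theorem inner_centerMass_eq_inv_sum {s : Finset E} {x : E → ℝ}
    (hGram : ∀ α ∈ s, ∑ β ∈ s, ⟪α, β⟫_ℝ * x β = 1) {α : E} (hα : α ∈ s) :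
    ⟪α, s.centerMass x id⟫_ℝ = (∑ β ∈ s, x β)⁻¹ := by
  simp only [Finset.centerMass, id, real_inner_smul_right, inner_sum, hGram α hα, mul_one,
    mul_comm (x _)]

end MinimalNorm

section IntrinsicInterior

variable {E : Type*} [NormedAddCommGroup E] [NormedSpace ℝ E]

theorem mem_intrinsicInterior_iff_forall_dist_lt {C : Set E} {x : E} :
    x ∈ intrinsicInterior ℝ C ↔
      x ∈ affineSpan ℝ C ∧ ∃ ε > 0, ∀ z ∈ affineSpan ℝ C, dist z x < ε → z ∈ C := by
  rw [mem_intrinsicInterior]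
  constructor
  · rintro ⟨y, hy, rfl⟩
    obtain ⟨ε, hε, hball⟩ := Metric.mem_nhds_iff.1 (mem_interior_iff_mem_nhds.1 hy)
    exact ⟨y.2, ε, hε, fun z hz hzy => hball (show (⟨z, hz⟩ : affineSpan ℝ C) ∈ _ from hzy)⟩
  · rintro ⟨hx, ε, hε, hball⟩
    refine ⟨⟨x, hx⟩, mem_interior_iff_mem_nhds.2 (Metric.mem_nhds_iff.2 ?_), rfl⟩
    exact ⟨ε, hε, fun z hz => hball z z.2 hz⟩

theorem Convex.combo_intrinsicInterior_self_mem_intrinsicInterior {C : Set E}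
    (hC : Convex ℝ C) {x y : E} (hx : x ∈ intrinsicInterior ℝ C) (hy : y ∈ C) {a b : ℝ}
    (ha : 0 < a) (hb : 0 ≤ b) (hab : a + b = 1) : a • x + b • y ∈ intrinsicInterior ℝ C := by
  obtain ⟨hxA, ε, hε, hball⟩ := mem_intrinsicInterior_iff_forall_dist_lt.1 hx
  set p := a • x + b • y
  have hpA : p ∈ affineSpan ℝ C := by
    have := AffineMap.lineMap_mem a (subset_affineSpan ℝ C hy) hxA
    rwa [AffineMap.lineMap_apply_module, ← hab, add_sub_cancel_left, add_comm] at this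
  refine mem_intrinsicInterior_iff_forall_dist_lt.2
    ⟨hpA, a * ε, by positivity, fun z hzA hz => ?_⟩
  -- `z` is the image under the homothety of ratio `a` centred at `y` of a point near `x`.
  set u := a⁻¹ • (z - p) + x
  have huA : u ∈ affineSpan ℝ C := AffineSubspace.vadd_mem_of_mem_direction
    (Submodule.smul_mem _ _ (AffineSubspace.vsub_mem_direction hzA hpA)) hxA
  have hu : u ∈ C := by
    refine hball u huA ?_
    rw [dist_eq_norm, add_sub_cancel_right, norm_smul, Real.norm_of_nonneg (inv_nonneg.2 ha.le),
      ← dist_eq_norm, inv_mul_lt_iff₀ ha]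
    exact hz
  have hz_eq : z = a • u + b • y := by
    have hau : a • u = z - p + a • x := by
      simp only [u, smul_add, smul_smul, mul_inv_cancel₀ ha.ne', one_smul]
    rw [hau]
    simp only [p]
    abel
  exact hz_eq ▸ hC hu hy ha.le hb hab

theorem Finset.centerMass_mem_intrinsicInterior_convexHull [FiniteDimensional ℝ E]
    {s : Finset E} (hs : s.Nonempty) {w : E → ℝ} (hw : ∀ i ∈ s, 0 < w i) :
    s.centerMass w id ∈ intrinsicInterior ℝ (convexHull ℝ (s : Set E)) := by
  obtain ⟨q, hq⟩ := (convexHull_nonempty_iff.2 (coe_nonempty.2 hs)).intrinsicInterior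
    (convex_convexHull ℝ _)
  obtain ⟨μ, -, hμ1, rfl⟩ := Finset.mem_convexHull.1 (intrinsicInterior_subset hq)
  have hW : 0 < ∑ i ∈ s, w i := sum_pos hw hs
  set c : E → ℝ := fun i => (∑ j ∈ s, w j)⁻¹ * w i
  have hc : ∀ i ∈ s, 0 < c i := fun i hi => mul_pos (inv_pos.2 hW) (hw i hi)
  have hc1 : ∑ i ∈ s, c i = 1 := by rw [← mul_sum, inv_mul_cancel₀ hW.ne']
  -- write the point as `θ q + (1 - θ) r` with `r` in the hull
  have hθ : ∀ᶠ θ in 𝓝[>] (0 : ℝ), θ < 1 ∧ ∀ i ∈ s, θ * μ i < c i := by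
    refine nhdsWithin_le_nhds ((eventually_lt_nhds zero_lt_one).and
      ((eventually_all_finset s).2 fun i hi => ?_))
    exact ((continuous_mul_const (μ i)).tendsto' 0 0 (zero_mul _)).eventually
      (eventually_lt_nhds (hc i hi))
  obtain ⟨θ, ⟨hθ1, hθc⟩, hθ0⟩ := (hθ.and self_mem_nhdsWithin).exists
  set r := s.centerMass (fun i => c i - θ * μ i) id
  have hr_sum : ∑ i ∈ s, (c i - θ * μ i) = 1 - θ := by
    rw [sum_sub_distrib, hc1, ← mul_sum, hμ1, mul_one]
  have hr : r ∈ convexHull ℝ (s : Set E) :=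
    s.centerMass_id_mem_convexHull (fun i hi => (sub_pos.2 (hθc i hi)).le)
      (hr_sum ▸ sub_pos.2 hθ1)
  have hp : s.centerMass w id = θ • s.centerMass μ id + (1 - θ) • r := by
    simp only [r, centerMass, hr_sum, hμ1, inv_one, one_smul, smul_smul,
      mul_inv_cancel₀ (sub_pos.2 hθ1).ne', smul_sum, id, sub_smul, sum_sub_distrib, one_mul]
    abel
  rw [hp]
  exact (convex_convexHull ℝ _).combo_intrinsicInterior_self_mem_intrinsicInterior hq hr hθ0
    (sub_pos.2 hθ1).le (add_sub_cancel _ _)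

end IntrinsicInterior

theorem exists_pos_forall_mul_norm_le {F : Type*} [NormedAddCommGroup F] [NormedSpace ℝ F]
    [FiniteDimensional ℝ F] {N : F → ℝ} (hN : Continuous N) (hpos : ∀ u ≠ 0, 0 < N u)
    (hsmul : ∀ (t : ℝ) (u : F), 0 ≤ t → N (t • u) = t * N u) :
    ∃ ε > 0, ∀ u, ε * ‖u‖ ≤ N u := by
  obtain ⟨ε, hε, hsphere⟩ := (isCompact_sphere (0 : F) 1).exists_forall_le' hN.continuousOn
    fun u hu => hpos u (ne_zero_of_mem_sphere one_ne_zero ⟨u, hu⟩)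
  refine ⟨ε, hε, fun u => ?_⟩
  rcases eq_or_ne u 0 with rfl | hu
  · simp [show N 0 = 0 by simpa using hsmul 0 0 le_rfl]
  · have hu' : 0 < ‖u‖ := norm_pos_iff.2 hu
    have := hsphere (‖u‖⁻¹ • u) (by simp [norm_smul, hu'.ne'])
    rwa [hsmul _ _ (inv_nonneg.2 hu'.le), le_inv_mul_iff₀ hu', mul_comm] at this

section ExpSum

variable {E ι : Type*} [NormedAddCommGroup E] [InnerProductSpace ℝ E] {s : Finset ι}
  {v : ι → E} {c k : ι → ℝ}

theorem exists_pos_inner_of_sum_smul_eq_zero (hc : ∀ i ∈ s, 0 < c i)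
    (hcv : ∑ i ∈ s, c i • v i = 0) {u : E} (hu : u ∈ span ℝ (v '' s)) (hu0 : u ≠ 0) :
    ∃ i ∈ s, 0 < ⟪v i, u⟫_ℝ := by
  by_contra! hle
  have hsum : ∑ i ∈ s, c i * ⟪v i, u⟫_ℝ = 0 := by
    simpa [sum_inner, real_inner_smul_left] using congrArg (⟪·, u⟫_ℝ) hcv
  have hzero : ∀ i ∈ s, ⟪u, v i⟫_ℝ = 0 := fun i hi => by
    have := (Finset.sum_eq_zero_iff_of_nonpos fun j hj =>
      mul_nonpos_of_nonneg_of_nonpos (hc j hj).le (hle j hj)).1 hsum i hi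
    rw [real_inner_comm]
    exact (mul_eq_zero.1 this).resolve_left (hc i hi).ne'
  have horth : span ℝ (v '' s) ≤ (ℝ ∙ u)ᗮ := by
    rw [span_le]
    rintro _ ⟨i, hi, rfl⟩
    exact mem_orthogonal_singleton_iff_inner_right.2 (hzero i hi)
  exact hu0 (inner_self_eq_zero.1 (mem_orthogonal_singleton_iff_inner_right.1 (horth hu)))

theorem tendsto_sum_mul_exp_inner_cocompact [FiniteDimensional ℝ E] (hc : ∀ i ∈ s, 0 < c i)
    (hcv : ∑ i ∈ s, c i • v i = 0) (hk : ∀ i ∈ s, 0 < k i) :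
    Tendsto (fun Z : span ℝ (v '' s) => ∑ i ∈ s, k i * Real.exp ⟪v i, (Z : E)⟫_ℝ)
      (cocompact _) atTop := by
  -- `exp` dominates the positive part, which grows linearly in every direction of the span
  obtain ⟨ε, hε, hN⟩ := exists_pos_forall_mul_norm_le
    (N := fun u : span ℝ (v '' s) => ∑ i ∈ s, k i * max ⟪v i, (u : E)⟫_ℝ 0) (by fun_prop)
    (fun u hu => by
      obtain ⟨i, hi, hpos⟩ := exists_pos_inner_of_sum_smul_eq_zero hc hcv u.2
        (by simpa using hu)
      exact Finset.sum_pos' (fun j hj => mul_nonneg (hk j hj).le (le_max_right _ _))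
        ⟨i, hi, mul_pos (hk i hi) (lt_max_of_lt_left hpos)⟩)
    (fun t u ht => by
      simp only [Submodule.coe_smul, real_inner_smul_right, Finset.mul_sum]
      refine Finset.sum_congr rfl fun i _ => ?_
      rw [mul_left_comm, mul_max_of_nonneg _ _ ht, mul_zero])
  refine tendsto_atTop_mono (fun Z => (hN Z).trans (Finset.sum_le_sum fun i hi =>
    mul_le_mul_of_nonneg_left (max_le ?_ (Real.exp_pos _).le) (hk i hi).le)) ?_
  · linarith [Real.add_one_le_exp ⟪v i, (Z : E)⟫_ℝ]
  · exact tendsto_norm_cocompact_atTop.const_mul_atTop hε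

theorem hasDerivAt_sum_mul_exp_inner_add_smul (Z u : E) :
    HasDerivAt (fun t : ℝ => ∑ i ∈ s, k i * Real.exp ⟪v i, Z + t • u⟫_ℝ)
      ⟪∑ i ∈ s, (k i * Real.exp ⟪v i, Z⟫_ℝ) • v i, u⟫_ℝ 0 := by
  rw [sum_inner]
  refine HasDerivAt.fun_sum fun i _ => ?_
  have h : HasDerivAt (fun t : ℝ => ⟪v i, Z + t • u⟫_ℝ) ⟪v i, u⟫_ℝ 0 := by
    simpa [inner_add_right, real_inner_smul_right] using
      ((hasDerivAt_id (0 : ℝ)).mul_const ⟪v i, u⟫_ℝ).const_add ⟪v i, Z⟫_ℝ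
  simpa [real_inner_smul_left, mul_assoc] using h.exp.const_mul (k i)

theorem exists_mem_span_sum_mul_exp_inner_smul_eq_zero [FiniteDimensional ℝ E]
    (hc : ∀ i ∈ s, 0 < c i) (hcv : ∑ i ∈ s, c i • v i = 0) (hk : ∀ i ∈ s, 0 < k i) :
    ∃ Z ∈ span ℝ (v '' s), ∑ i ∈ s, (k i * Real.exp ⟪v i, Z⟫_ℝ) • v i = 0 := by
  obtain ⟨Z, hZ⟩ := (continuous_finsetSum _ fun i _ => by fun_prop).exists_forall_le
    (tendsto_sum_mul_exp_inner_cocompact hc hcv hk)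
  refine ⟨Z, Z.2, ?_⟩
  -- the sum is the gradient at the minimiser `Z`; it lies in the span and is orthogonal to it
  have horth : ∀ u ∈ span ℝ (v '' s), ⟪∑ i ∈ s, (k i * Real.exp ⟪v i, Z⟫_ℝ) • v i, u⟫_ℝ = 0 :=
    fun u hu => IsLocalMin.hasDerivAt_eq_zero
      (Eventually.of_forall fun t => by simpa using hZ (Z + t • ⟨u, hu⟩))
      (hasDerivAt_sum_mul_exp_inner_add_smul (Z : E) u)
  exact inner_self_eq_zero.1 (horth _ (sum_mem fun i hi =>
    smul_mem _ _ (subset_span ⟨i, hi, rfl⟩)))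

theorem exists_centerMass_mul_exp_inner_eq [FiniteDimensional ℝ E] {z : ι → E}
    (hs : s.Nonempty) (hc : ∀ i ∈ s, 0 < c i) (hk : ∀ i ∈ s, 0 < k i) :
    ∃ Z ∈ span ℝ ((fun i => z i - s.centerMass c z) '' s),
      s.centerMass (fun i => k i * Real.exp ⟪z i, Z⟫_ℝ) z = s.centerMass c z := by
  set p := s.centerMass c z
  have hcv : ∑ i ∈ s, c i • (z i - p) = 0 :=
    (Finset.centerMass_eq_iff_sum_smul_sub_eq_zero (Finset.sum_pos hc hs).ne').1 rfl
  obtain ⟨Z, hZ, hsum⟩ := exists_mem_span_sum_mul_exp_inner_smul_eq_zero hc hcv hk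
  refine ⟨Z, hZ, (Finset.centerMass_eq_iff_sum_smul_sub_eq_zero (Finset.sum_pos (fun i hi =>
    mul_pos (hk i hi) (Real.exp_pos _)) hs).ne').2 ?_⟩
  have hfactor : ∀ i, (k i * Real.exp ⟪z i, Z⟫_ℝ) • (z i - p) =
      Real.exp ⟪p, Z⟫_ℝ • (k i * Real.exp ⟪z i - p, Z⟫_ℝ) • (z i - p) := fun i => by
    rw [smul_smul, inner_sub_left, Real.exp_sub]
    field_simp
  simp only [hfactor, ← Finset.smul_sum, hsum, smul_zero]

end ExpSum

section WeightSpace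

variable {E V : Type*} [NormedAddCommGroup E] [InnerProductSpace ℝ E] [NormedAddCommGroup V]
  [InnerProductSpace ℝ V] {π : E →ₗ[ℝ] V →L[ℝ] V} {𝔞 : Submodule ℝ E}

theorem momentMap_inner [FiniteDimensional ℝ E] (π : E →ₗ[ℝ] V →L[ℝ] V) (v : V) (Y : E) :
    ⟪momentMap π v, Y⟫_ℝ = ⟪(π Y) v, v⟫_ℝ / ‖v‖ ^ 2 := by
  rw [momentMap, InnerProductSpace.toDual_symm_apply]
  rfl

theorem inner_eq_zero_of_mem_wtSpace (hsa : ∀ X ∈ 𝔞, ∀ v w : V, ⟪π X v, w⟫_ℝ = ⟪v, π X w⟫_ℝ)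
    {α β : E} (hα : α ∈ 𝔞) (hβ : β ∈ 𝔞) (hαβ : α ≠ β) {u v : V} (hu : u ∈ wtSpace π 𝔞 α)
    (hv : v ∈ wtSpace π 𝔞 β) : ⟪u, v⟫_ℝ = 0 := by
  have hX : α - β ∈ 𝔞 := sub_mem hα hβ
  have h := hsa _ hX u v
  rw [hu _ hX, hv _ hX, real_inner_smul_left, real_inner_smul_right] at h
  have : ⟪α - β, α - β⟫_ℝ * ⟪u, v⟫_ℝ = 0 := by rw [inner_sub_left, sub_mul, h, sub_self]
  exact (mul_eq_zero.1 this).resolve_left (inner_self_ne_zero.2 (sub_ne_zero.2 hαβ))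

variable {s : Finset E} {u : E → V}

theorem inner_sum_of_mem_wtSpace (hsa : ∀ X ∈ 𝔞, ∀ v w : V, ⟪π X v, w⟫_ℝ = ⟪v, π X w⟫_ℝ)
    (hs : ∀ α ∈ s, α ∈ 𝔞) (hu : ∀ α ∈ s, u α ∈ wtSpace π 𝔞 α) {α : E} (hα : α ∈ s) :
    ⟪u α, ∑ β ∈ s, u β⟫_ℝ = ‖u α‖ ^ 2 := by
  rw [inner_sum, Finset.sum_eq_single α (fun β hβ hβα => inner_eq_zero_of_mem_wtSpace hsa
    (hs α hα) (hs β hβ) (Ne.symm hβα) (hu α hα) (hu β hβ)) (absurd hα),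
    real_inner_self_eq_norm_sq]

theorem sum_ne_zero_of_mem_wtSpace (hsa : ∀ X ∈ 𝔞, ∀ v w : V, ⟪π X v, w⟫_ℝ = ⟪v, π X w⟫_ℝ)
    (hs : ∀ α ∈ s, α ∈ 𝔞) (hu : ∀ α ∈ s, u α ∈ wtSpace π 𝔞 α) {α : E} (hα : α ∈ s)
    (hα0 : u α ≠ 0) :
    ∑ β ∈ s, u β ≠ 0 := fun h => by
  have := inner_sum_of_mem_wtSpace hsa hs hu hα
  rw [h, inner_zero_right, eq_comm] at this
  exact hα0 (by simpa using this)

theorem momentMap_sum_of_mem_wtSpace [FiniteDimensional ℝ E]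
    (hsa : ∀ X ∈ 𝔞, ∀ v w : V, ⟪π X v, w⟫_ℝ = ⟪v, π X w⟫_ℝ)
    (hs : ∀ α ∈ s, α ∈ 𝔞) (hu : ∀ α ∈ s, u α ∈ wtSpace π 𝔞 α)
    (hm : momentMap π (∑ α ∈ s, u α) ∈ 𝔞) :
    momentMap π (∑ α ∈ s, u α) = s.centerMass (fun α => ‖u α‖ ^ 2) id := by
  have hc : s.centerMass (fun α => ‖u α‖ ^ 2) id ∈ 𝔞 := 𝔞.centerMass_id_mem hs _
  have hnorm : ‖∑ α ∈ s, u α‖ ^ 2 = ∑ α ∈ s, ‖u α‖ ^ 2 := by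
    rw [← real_inner_self_eq_norm_sq, sum_inner]
    exact Finset.sum_congr rfl fun α hα => inner_sum_of_mem_wtSpace hsa hs hu hα
  have hinner : ∀ Y ∈ 𝔞, ⟪momentMap π (∑ α ∈ s, u α), Y⟫_ℝ =
      ⟪s.centerMass (fun α => ‖u α‖ ^ 2) id, Y⟫_ℝ := fun Y hY => by
    have hpair : ⟪π Y (∑ α ∈ s, u α), ∑ α ∈ s, u α⟫_ℝ = ∑ α ∈ s, ‖u α‖ ^ 2 * ⟪α, Y⟫_ℝ := by
      rw [map_sum, sum_inner]
      refine Finset.sum_congr rfl fun α hα => ?_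
      rw [hu α hα Y hY, real_inner_smul_left, inner_sum_of_mem_wtSpace hsa hs hu hα, mul_comm]
    rw [momentMap_inner, hpair, hnorm, Finset.centerMass, real_inner_smul_left, sum_inner,
      div_eq_inv_mul]
    simp only [real_inner_smul_left, id]
  have := hinner _ (sub_mem hm hc)
  rwa [← sub_eq_zero, ← inner_sub_left, inner_self_eq_zero, sub_eq_zero] at this

theorem apply_sum_of_mem_wtSpace (hu : ∀ α ∈ s, u α ∈ wtSpace π 𝔞 α) {Y : E} (hY : Y ∈ 𝔞)
    {t : ℝ} (ht : ∀ α ∈ s, ⟪α, Y⟫_ℝ = t) :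
    π Y (∑ α ∈ s, u α) = t • ∑ α ∈ s, u α := by
  rw [map_sum, Finset.smul_sum]
  exact Finset.sum_congr rfl fun α hα => by rw [hu α hα Y hY, ht α hα]

theorem exp_apply_sum_of_mem_wtSpace [CompleteSpace V] (hu : ∀ α ∈ s, u α ∈ wtSpace π 𝔞 α)
    {X : E} (hX : X ∈ 𝔞) :
    NormedSpace.exp (π X) (∑ α ∈ s, u α) = ∑ α ∈ s, Real.exp ⟪α, X⟫_ℝ • u α := by
  rw [map_sum]
  exact Finset.sum_congr rfl fun α hα => exp_apply_of_apply_eq_smul (hu α hα X hX)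

theorem momentMap_exp_sum_of_isNiceSpace [FiniteDimensional ℝ E] [FiniteDimensional ℝ V]
    (hsa : ∀ X ∈ 𝔞, ∀ v w : V, ⟪π X v, w⟫_ℝ = ⟪v, π X w⟫_ℝ) (hs : ∀ α ∈ s, α ∈ 𝔞)
    (hu : ∀ α ∈ s, u α ∈ wtSpace π 𝔞 α) {W : Submodule ℝ V} (hW : IsNiceSpace π 𝔞 W)
    (hsW : ∑ α ∈ s, u α ∈ W) {α₀ : E} (hα₀ : α₀ ∈ s) (hu₀ : u α₀ ≠ 0) {X : E} (hX : X ∈ 𝔞) :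
    momentMap π (NormedSpace.exp (π X) (∑ α ∈ s, u α)) =
      s.centerMass (fun α => ‖u α‖ ^ 2 * Real.exp ⟪α, (2 : ℝ) • X⟫_ℝ) id := by
  have hu' : ∀ α ∈ s, Real.exp ⟪α, X⟫_ℝ • u α ∈ wtSpace π 𝔞 α := fun α hα =>
    (wtSpace π 𝔞 α).smul_mem _ (hu α hα)
  have hm := hW.2 _ (exp_apply_mem W.closed_of_finiteDimensional (hW.1 X hX) hsW) <| by
    rw [exp_apply_sum_of_mem_wtSpace hu hX]
    exact sum_ne_zero_of_mem_wtSpace hsa hs hu' hα₀ (smul_ne_zero (Real.exp_pos _).ne' hu₀)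
  rw [exp_apply_sum_of_mem_wtSpace hu hX] at hm ⊢
  rw [momentMap_sum_of_mem_wtSpace hsa hs hu' hm]
  congr 1
  funext α
  rw [norm_smul, mul_pow, Real.norm_of_nonneg (Real.exp_pos _).le, ← Real.exp_nat_mul,
    real_inner_smul_right, mul_comm]
  norm_num

end WeightSpace

theorem distinguished_of_gram_positive_solution_one_general
    {𝔤 V : Type*} [NormedAddCommGroup 𝔤] [InnerProductSpace ℝ 𝔤] [FiniteDimensional ℝ 𝔤]
    [NormedAddCommGroup V] [InnerProductSpace ℝ V] [FiniteDimensional ℝ V]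
    -- the Lie bracket of `𝔤` and the representation `π : 𝔤 → 𝔤𝔩(V)`:
    (π : 𝔤 →ₗ[ℝ] V →L[ℝ] V)
    -- `𝔞` is an abelian subalgebra acting by self-adjoint operators:
    (𝔞 : Submodule ℝ 𝔤)
    (hsa : ∀ X ∈ 𝔞, ∀ v w : V, ⟪(π X) v, w⟫_ℝ = ⟪v, (π X) w⟫_ℝ)
    -- roots and weights:
    (ΔV : Finset 𝔤) (hΔV : ∀ α ∈ ΔV, α ∈ 𝔞)
    (W : Submodule ℝ V) (hW : IsNiceSpace π 𝔞 W)
    (w : V) (hw : w ∈ W)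
    -- `cc α` is the component of `w` in the weight space `V_α`:
    (cc : 𝔤 → V) (hcc : ∀ α ∈ ΔV, cc α ∈ wtSpace π 𝔞 α) (hwsum : w = ∑ α ∈ ΔV, cc α)
    (Rw : Finset 𝔤) (hRw : Rw = ΔV.filter fun α => cc α ≠ 0)
    -- `mcc` is the (unique) point of minimal norm in the convex hull of `R(w)`:
    (mcc : 𝔤) (hmcc₁ : mcc ∈ convexHull ℝ (Rw : Set 𝔤))
    (hmcc₂ : ∀ y ∈ convexHull ℝ (Rw : Set 𝔤), ‖mcc‖ ≤ ‖y‖)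
    -- a positive solution `x` of the Gram system `U x = (1,…,1)ᵀ`:
    (x : 𝔤 → ℝ) (hxpos : ∀ α ∈ Rw, 0 < x α)
    (hGram : ∀ α ∈ Rw, ∑ β ∈ Rw, ⟪α, β⟫_ℝ * x β = 1)
    :
    mcc ∈ intrinsicInterior ℝ (convexHull ℝ (Rw : Set 𝔤)) ∧
    ∃ X ∈ 𝔞,
      (π (momentMap π ((NormedSpace.exp (π X)) w))) ((NormedSpace.exp (π X)) w) =
        (‖momentMap π ((NormedSpace.exp (π X)) w)‖ ^ 2) • (NormedSpace.exp (π X)) w := by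
  have hRw_mem : ∀ α ∈ Rw, α ∈ ΔV ∧ cc α ≠ 0 := fun α hα => by rwa [hRw, mem_filter] at hα
  have h𝔞 : ∀ α ∈ Rw, α ∈ 𝔞 := fun α hα => hΔV α (hRw_mem α hα).1
  have hcc' : ∀ α ∈ Rw, cc α ∈ wtSpace π 𝔞 α := fun α hα => hcc α (hRw_mem α hα).1
  have hw_eq : w = ∑ α ∈ Rw, cc α := by rw [hwsum, hRw, sum_filter_ne_zero]
  have hne : Rw.Nonempty := by simpa using convexHull_nonempty_iff.1 ⟨mcc, hmcc₁⟩
  set p := Rw.centerMass x id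
  have hp : ∀ α ∈ Rw, ⟪α, p⟫_ℝ = (∑ β ∈ Rw, x β)⁻¹ := fun α hα =>
    inner_centerMass_eq_inv_sum hGram hα
  have hp_hull : p ∈ convexHull ℝ (Rw : Set 𝔤) :=
    Rw.centerMass_id_mem_convexHull (fun α hα => (hxpos α hα).le) (sum_pos hxpos hne)
  have hmcc : mcc = p := eq_of_mem_convexHull_of_norm_le hp hp_hull hmcc₁ (hmcc₂ p hp_hull)
  refine ⟨hmcc ▸ Rw.centerMass_mem_intrinsicInterior_convexHull hne hxpos, ?_⟩
  obtain ⟨Z, hZ, hZp⟩ := exists_centerMass_mul_exp_inner_eq (z := id) (k := fun α => ‖cc α‖ ^ 2)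
    hne hxpos fun α hα => pow_pos (norm_pos_iff.2 (hRw_mem α hα).2) 2
  set X : 𝔤 := (2 : ℝ)⁻¹ • Z
  have hX : X ∈ 𝔞 := 𝔞.smul_mem _ <| span_le.2 (by
    rintro _ ⟨α, hα, rfl⟩
    exact sub_mem (h𝔞 α hα) (𝔞.centerMass_id_mem h𝔞 x)) hZ
  have hm : momentMap π (NormedSpace.exp (π X) w) = p := by
    obtain ⟨α, hα⟩ := hne
    rw [hw_eq, momentMap_exp_sum_of_isNiceSpace hsa h𝔞 hcc' hW (hw_eq ▸ hw) hα
      (hRw_mem α hα).2 hX, smul_inv_smul₀ two_ne_zero]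
    exact hZp
  refine ⟨X, hX, ?_⟩
  rw [hm, hw_eq, exp_apply_sum_of_mem_wtSpace hcc' hX, apply_sum_of_mem_wtSpace
    (fun α hα => (wtSpace π 𝔞 α).smul_mem _ (hcc' α hα)) (𝔞.centerMass_id_mem h𝔞 x) hp,
    ← real_inner_self_eq_norm_sq, inner_eq_of_mem_convexHull hp hp_hull]

/-- if `W` is a nice space, `w ∈ W∖{0}`, `0` is not in the convex hull of
`R(w)` and the Gram matrix `U` of `R(w)` admits a positive solution of `Ux = [1]`, then
`mcc(R(w))` lies in the intrinsic interior of the convex hull of `R(w)` and the orbit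
of `w` is distinguished. -/
theorem distinguished_of_gram_positive_solution_one
    {𝔤 V : Type*} [NormedAddCommGroup 𝔤] [InnerProductSpace ℝ 𝔤] [FiniteDimensional ℝ 𝔤]
    [NormedAddCommGroup V] [InnerProductSpace ℝ V] [FiniteDimensional ℝ V]
    -- the Lie bracket of `𝔤` and the representation `π : 𝔤 → 𝔤𝔩(V)`:
    (bk : 𝔤 →ₗ[ℝ] 𝔤 →ₗ[ℝ] 𝔤)
    (hbk_alt : ∀ X : 𝔤, bk X X = 0)
    (hbk_jac : ∀ X Y Z : 𝔤, bk X (bk Y Z) + bk Y (bk Z X) + bk Z (bk X Y) = 0)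
    (π : 𝔤 →ₗ[ℝ] V →L[ℝ] V)
    (hrep : ∀ X Y : 𝔤, π (bk X Y) = π X * π Y - π Y * π X)
    -- `𝔞` is an abelian subalgebra acting by self-adjoint operators:
    (𝔞 : Submodule ℝ 𝔤)
    (hab : ∀ X ∈ 𝔞, ∀ Y ∈ 𝔞, bk X Y = 0)
    (hsa : ∀ X ∈ 𝔞, ∀ v w : V, ⟪(π X) v, w⟫_ℝ = ⟪v, (π X) w⟫_ℝ)
    -- roots and weights:
    (Δ𝔤 : Finset 𝔤) (hΔ𝔤 : ∀ γ ∈ Δ𝔤, γ ∈ 𝔞 ∧ γ ≠ 0)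
    (ΔV : Finset 𝔤) (hΔV : ∀ α ∈ ΔV, α ∈ 𝔞)
    -- `𝔤₀ = 𝔞 ⊕ 𝔪` is the centralizer of `𝔞`, `π` is skew-adjoint on `𝔪`:
    (𝔪 : Submodule ℝ 𝔤)
    (hskew : ∀ Y ∈ 𝔪, ∀ v w : V, ⟪(π Y) v, w⟫_ℝ = -⟪v, (π Y) w⟫_ℝ)
    (h𝔞𝔪 : ∀ X ∈ 𝔞, ∀ Y ∈ 𝔪, ⟪X, Y⟫_ℝ = 0)
    (h𝔤₀ : ∀ Z : 𝔤, (∀ X ∈ 𝔞, bk X Z = 0) ↔ Z ∈ 𝔞 ⊔ 𝔪)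
    -- the orthogonal restricted-root space decomposition of `𝔤`:
    (h𝔤dec : (𝔞 ⊔ 𝔪) ⊔ (⨆ γ ∈ Δ𝔤, rootSpace bk 𝔞 γ) = ⊤)
    (h𝔤orth : ∀ γ ∈ Δ𝔤, ∀ Y ∈ rootSpace bk 𝔞 γ, ∀ Z : 𝔤,
      (Z ∈ 𝔞 ⊔ 𝔪 ∨ ∃ γ' ∈ Δ𝔤, γ' ≠ γ ∧ Z ∈ rootSpace bk 𝔞 γ') → ⟪Y, Z⟫_ℝ = 0)
    -- the weight space decomposition of `V`:
    (hVdec : (⨆ α ∈ ΔV, wtSpace π 𝔞 α) = ⊤)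
    (W : Submodule ℝ V) (hW : IsNiceSpace π 𝔞 W)
    (w : V) (hw : w ∈ W) (hw0 : w ≠ 0)
    -- `cc α` is the component of `w` in the weight space `V_α`:
    (cc : 𝔤 → V) (hcc : ∀ α ∈ ΔV, cc α ∈ wtSpace π 𝔞 α) (hwsum : w = ∑ α ∈ ΔV, cc α)
    (Rw : Finset 𝔤) (hRw : Rw = ΔV.filter fun α => cc α ≠ 0)
    -- `mcc` is the (unique) point of minimal norm in the convex hull of `R(w)`:
    (mcc : 𝔤) (hmcc₁ : mcc ∈ convexHull ℝ (Rw : Set 𝔤))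
    (hmcc₂ : ∀ y ∈ convexHull ℝ (Rw : Set 𝔤), ‖mcc‖ ≤ ‖y‖)
    (h0 : (0 : 𝔤) ∉ convexHull ℝ (Rw : Set 𝔤))
    -- a positive solution `x` of the Gram system `U x = (1,…,1)ᵀ`:
    (x : 𝔤 → ℝ) (hxpos : ∀ α ∈ Rw, 0 < x α)
    (hGram : ∀ α ∈ Rw, ∑ β ∈ Rw, ⟪α, β⟫_ℝ * x β = 1)
    :
    mcc ∈ intrinsicInterior ℝ (convexHull ℝ (Rw : Set 𝔤)) ∧
    ∃ X ∈ 𝔞,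
      (π (momentMap π ((NormedSpace.exp (π X)) w))) ((NormedSpace.exp (π X)) w) =
        (‖momentMap π ((NormedSpace.exp (π X)) w)‖ ^ 2) • (NormedSpace.exp (π X)) w :=
  distinguished_of_gram_positive_solution_one_general π 𝔞 hsa ΔV hΔV W hW w hw cc hcc hwsum Rw hRw
    mcc hmcc₁ hmcc₂ x hxpos hGram
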